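/- arXiv:2507.17036 — 2 statements merged into one kernel-verified Lean document; each statement's English description precedes it below -/
import Mathlib

section
/- Let A ∈ ℂ^{N×N} with a fixed singular value decomposition A = Σ_{j=1}^N λ_j u_j v_j* (λ_1 ≥ … ≥ λ_N ≥ 0, (u_j) and (v_j) orthonormal), let r ∈ {1,…,N}, and let ε ∈ (0,1). Suppose M ∈ ℂ^{m×N} is an ε-JL map of the set {u_j : r < j ≤ N} ∪ {v_j : r < j ≤ N} of the smallest N−r left and right singular vectors of A. Then σ₁(M A_{∖r} M*) ≤ (1+ε)·‖A_{∖r}‖_*, where A_{∖r} := Σ_{j=r+1}^N λ_j u_j v_j*. -/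
open scoped Matrix

/-- The squared Euclidean (ℓ²) norm of a vector in `ℂ^n`. -/
noncomputable def nsq {n : ℕ} (x : Fin n → ℂ) : ℝ := ∑ i, ‖x i‖ ^ 2

/-- `M` is an `ε`-JL map of the set `S ⊆ ℂ^N`. -/
def IsJLMap {m N : ℕ} (M : Matrix (Fin m) (Fin N) ℂ) (ε : ℝ) (S : Set (Fin N → ℂ)) : Prop :=
  ∀ x ∈ S, (1 - ε) * nsq x ≤ nsq (M.mulVec x) ∧ nsq (M.mulVec x) ≤ (1 + ε) * nsq x

/-- The `j`-th largest singular value of a square matrix (0-indexed), `0` if `j ≥ d`. -/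
noncomputable def sval {d : ℕ} (B : Matrix (Fin d) (Fin d) ℂ) (j : ℕ) : ℝ :=
  if h : j < d then
    Real.sqrt ((Matrix.isHermitian_conjTranspose_mul_self B).eigenvalues
      (Tuple.sort (Matrix.isHermitian_conjTranspose_mul_self B).eigenvalues (Fin.rev ⟨j, h⟩)))
  else 0

/-- The nuclear norm `‖B‖_* = Σ_j σ_j(B)` of a square matrix. -/
noncomputable def nuclearNorm {d : ℕ} (B : Matrix (Fin d) (Fin d) ℂ) : ℝ :=
  ∑ j ∈ Finset.range d, sval B j

/-- The tail `A_{∖r} = Σ_{j > r} λ_j u_j v_j*` of a singular value decomposition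
(`r` counted 1-based, i.e. the sum is over all 0-based indices `j` with `r ≤ j`). -/
noncomputable def tailMat {N : ℕ} (lam : Fin N → ℝ) (u v : Fin N → Fin N → ℂ) (r : ℕ) :
    Matrix (Fin N) (Fin N) ℂ :=
  ∑ j : Fin N, if r ≤ (j : ℕ) then
    lam j • Matrix.vecMulVec (u j) (fun k => (starRingEnd ℂ) (v j k)) else 0

/-! Write `T = A_{∖r} = ∑_{j>r} λ_j u_j v_jᴴ`. Then `M T Mᴴ = ∑_{j>r} λ_j (M u_j)(M v_j)ᴴ` is a sum
of rank-one matrices of operator norm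
`λ_j ‖M u_j‖ ‖M v_j‖ ≤ λ_j (‖M u_j‖² + ‖M v_j‖²) / 2 ≤ (1 + ε) λ_j` by the JL property, and `σ₁` is
at most the operator norm, so `σ₁(M T Mᴴ) ≤ (1 + ε) ∑_{j>r} λ_j`. This sum is `‖T‖_*`: the matrix
`Tᴴ T = V diag(λ_j² [j > r]) Vᴴ`, with `V` unitary, has the characteristic polynomial of the
diagonal matrix, hence the eigenvalues `λ_j² [j > r]`. -/

open scoped Matrix.Norms.L2Operator
open Matrix

section RCLike

variable {𝕜 : Type*} [RCLike 𝕜] {m n : Type*} [Fintype m] [Fintype n]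

lemma Matrix.IsHermitian.eigenvalues_le_l2_opNorm [DecidableEq n] {A : Matrix n n 𝕜}
    (hA : A.IsHermitian) (i : n) : hA.eigenvalues i ≤ ‖A‖ := by
  have hw : ‖hA.eigenvectorBasis i‖ = 1 := hA.eigenvectorBasis.orthonormal.1 i
  calc hA.eigenvalues i ≤ ‖hA.eigenvalues i‖ := Real.le_norm_self _
    _ = ‖(EuclideanSpace.equiv n 𝕜).symm (A *ᵥ hA.eigenvectorBasis i)‖ := by
        rw [hA.mulVec_eigenvectorBasis]
        simp [norm_smul, hw]
    _ ≤ ‖A‖ := by simpa [hw] using A.l2_opNorm_mulVec (hA.eigenvectorBasis i)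

lemma Matrix.l2_opNorm_vecMulVec_star_le [DecidableEq n] (a : m → 𝕜) (b : n → 𝕜) :
    ‖vecMulVec a (star b)‖ ≤
      ‖(EuclideanSpace.equiv m 𝕜).symm a‖ * ‖(EuclideanSpace.equiv n 𝕜).symm b‖ := by
  rw [l2_opNorm_def]
  refine ContinuousLinearMap.opNorm_le_bound _ (by positivity) fun x => ?_
  simp only [LinearEquiv.trans_apply, LinearMap.coe_toContinuousLinearMap', toLpLin_apply,
    vecMulVec_mulVec, op_smul_eq_smul]
  have hinner : star b ⬝ᵥ x.ofLp = inner 𝕜 ((EuclideanSpace.equiv n 𝕜).symm b) x := by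
    rw [dotProduct_comm]; rfl
  rw [hinner, WithLp.toLp_smul, norm_smul]
  calc _ ≤ ‖(EuclideanSpace.equiv n 𝕜).symm b‖ * ‖x‖ * ‖(EuclideanSpace.equiv m 𝕜).symm a‖ :=
        mul_le_mul_of_nonneg_right (norm_inner_le_norm _ _) (norm_nonneg _)
    _ = _ := by ring

open Polynomial in
lemma Matrix.IsHermitian.map_eigenvalues_eq_of_eq_mul_diagonal_mul_conjTranspose
    [DecidableEq n] {A V : Matrix n n 𝕜} (hA : A.IsHermitian) (hV : Vᴴ * V = 1) {μ : n → ℝ}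
    (hAV : A = V * diagonal (RCLike.ofReal ∘ μ) * Vᴴ) :
    Finset.univ.val.map hA.eigenvalues = Finset.univ.val.map μ := by
  have hcharpoly : A.charpoly = ∏ i, (X - C (μ i : 𝕜)) := by
    rw [hAV, charpoly_mul_comm, ← mul_assoc, hV, one_mul, charpoly_diagonal]
    rfl
  have hroots := hA.roots_charpoly_eq_eigenvalues
  rw [hcharpoly, roots_prod _ _ (by simp [Finset.prod_ne_zero_iff, X_sub_C_ne_zero])] at hroots
  rw [← Multiset.map_map] at hroots
  simp only [roots_X_sub_C, Multiset.bind_singleton] at hroots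
  refine Multiset.map_injective RCLike.ofReal_injective (hroots.symm.trans ?_)
  rw [Multiset.map_map]
  rfl

lemma Matrix.conjTranspose_mul_self_transpose_of_orthonormal {ι : Type*} [Fintype ι] [DecidableEq ι]
    {u : ι → n → 𝕜}
    (hu : ∀ i j, ∑ k, (starRingEnd 𝕜) (u i k) * u j k = if i = j then 1 else 0) :
    (of u)ᵀᴴ * (of u)ᵀ = 1 := by
  ext i j
  simpa [mul_apply, one_apply] using hu i j

end RCLike

lemma sval_le_l2_opNorm {d : ℕ} (B : Matrix (Fin d) (Fin d) ℂ) (j : ℕ) : sval B j ≤ ‖B‖ := by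
  unfold sval
  split
  · calc _ ≤ √‖Bᴴ * B‖ :=
          Real.sqrt_le_sqrt ((isHermitian_conjTranspose_mul_self B).eigenvalues_le_l2_opNorm _)
      _ = ‖B‖ := by rw [l2_opNorm_conjTranspose_mul_self, Real.sqrt_mul_self (norm_nonneg B)]
  · exact norm_nonneg B

lemma nuclearNorm_eq_sum_sqrt_eigenvalues {d : ℕ} (B : Matrix (Fin d) (Fin d) ℂ) :
    nuclearNorm B = ∑ i, √((isHermitian_conjTranspose_mul_self B).eigenvalues i) := by
  set hB := isHermitian_conjTranspose_mul_self B
  rw [nuclearNorm, ← Fin.sum_univ_eq_sum_range]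
  simp only [sval, Fin.is_lt, dif_pos]
  exact Fintype.sum_equiv (Fin.revPerm.trans (Tuple.sort hB.eigenvalues)) _ _ fun _ => rfl

lemma nuclearNorm_mul_diagonal_mul_conjTranspose {d : ℕ} {U V : Matrix (Fin d) (Fin d) ℂ}
    (hU : Uᴴ * U = 1) (hV : Vᴴ * V = 1) {σ : Fin d → ℝ} (hσ : ∀ i, 0 ≤ σ i) :
    nuclearNorm (U * diagonal (RCLike.ofReal ∘ σ) * Vᴴ) = ∑ i, σ i := by
  set B := U * diagonal (RCLike.ofReal ∘ σ) * Vᴴ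
  set hB := isHermitian_conjTranspose_mul_self B
  have hBB : Bᴴ * B = V * diagonal (RCLike.ofReal ∘ (σ ^ 2)) * Vᴴ := by
    simp only [B, conjTranspose_mul, conjTranspose_conjTranspose, diagonal_conjTranspose,
      Matrix.mul_assoc]
    rw [← Matrix.mul_assoc Uᴴ, hU, Matrix.one_mul, ← Matrix.mul_assoc (diagonal _),
      diagonal_mul_diagonal]
    congr 3
    ext i
    simp [sq]
  rw [nuclearNorm_eq_sum_sqrt_eigenvalues]
  calc _ = ((Finset.univ.val.map hB.eigenvalues).map Real.sqrt).sum := by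
        rw [Multiset.map_map]; rfl
    _ = ((Finset.univ.val.map (σ ^ 2)).map Real.sqrt).sum := by
        rw [hB.map_eigenvalues_eq_of_eq_mul_diagonal_mul_conjTranspose hV hBB]
    _ = ∑ i, σ i := by
        rw [Multiset.map_map]
        exact Finset.sum_congr rfl fun i _ => Real.sqrt_sq (hσ i)

lemma nsq_eq_norm_sq {n : ℕ} (x : Fin n → ℂ) :
    nsq x = ‖(EuclideanSpace.equiv (Fin n) ℂ).symm x‖ ^ 2 := by
  rw [EuclideanSpace.norm_eq, Real.sq_sqrt (by positivity)]
  rfl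

lemma ofReal_nsq {n : ℕ} (x : Fin n → ℂ) :
    (nsq x : ℂ) = ∑ k, (starRingEnd ℂ) (x k) * x k := by
  simp [nsq, Complex.conj_mul']

lemma nsq_eq_one_of_orthonormal {N : ℕ} {u : Fin N → Fin N → ℂ}
    (hu : ∀ i j, ∑ k, (starRingEnd ℂ) (u i k) * u j k = if i = j then 1 else 0) (j : Fin N) :
    nsq (u j) = 1 := by
  exact_mod_cast (ofReal_nsq (u j)).trans ((hu j j).trans (if_pos rfl))

lemma IsJLMap.norm_mulVec_mul_norm_mulVec_le {m N : ℕ} {M : Matrix (Fin m) (Fin N) ℂ} {ε : ℝ}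
    {S : Set (Fin N → ℂ)} (hM : IsJLMap M ε S) {x y : Fin N → ℂ} (hx : x ∈ S) (hy : y ∈ S)
    (hx1 : nsq x = 1) (hy1 : nsq y = 1) :
    ‖(EuclideanSpace.equiv (Fin m) ℂ).symm (M *ᵥ x)‖ *
      ‖(EuclideanSpace.equiv (Fin m) ℂ).symm (M *ᵥ y)‖ ≤ 1 + ε := by
  have hMx := (hM x hx).2
  have hMy := (hM y hy).2
  rw [hx1, mul_one, nsq_eq_norm_sq] at hMx
  rw [hy1, mul_one, nsq_eq_norm_sq] at hMy
  nlinarith [two_mul_le_add_sq ‖(EuclideanSpace.equiv (Fin m) ℂ).symm (M *ᵥ x)‖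
    ‖(EuclideanSpace.equiv (Fin m) ℂ).symm (M *ᵥ y)‖]

noncomputable def tailSingularValues {N : ℕ} (lam : Fin N → ℝ) (r : ℕ) (j : Fin N) : ℝ :=
  if r ≤ (j : ℕ) then lam j else 0

lemma tailSingularValues_nonneg {N : ℕ} {lam : Fin N → ℝ} (hnn : ∀ j, 0 ≤ lam j) (r : ℕ)
    (j : Fin N) : 0 ≤ tailSingularValues lam r j := by
  unfold tailSingularValues
  split
  exacts [hnn j, le_rfl]

lemma tailMat_eq_sum {N : ℕ} (lam : Fin N → ℝ) (u v : Fin N → Fin N → ℂ) (r : ℕ) :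
    tailMat lam u v r = ∑ j, tailSingularValues lam r j • vecMulVec (u j) (star (v j)) := by
  refine Finset.sum_congr rfl fun j _ => ?_
  unfold tailSingularValues
  split
  · rfl
  · exact (zero_smul ℝ _).symm

lemma tailMat_eq_mul_diagonal_mul_conjTranspose {N : ℕ} (lam : Fin N → ℝ)
    (u v : Fin N → Fin N → ℂ) (r : ℕ) :
    tailMat lam u v r =
      (of u)ᵀ * diagonal (RCLike.ofReal ∘ tailSingularValues lam r) * (of v)ᵀᴴ := by
  ext a b
  rw [tailMat_eq_sum, mul_apply]
  simp only [Matrix.sum_apply, Matrix.smul_apply, mul_diagonal, vecMulVec_apply,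
    conjTranspose_apply, transpose_apply, of_apply, Function.comp_apply, Pi.star_apply,
    Complex.real_smul, RCLike.ofReal_eq_complex_ofReal]
  exact Finset.sum_congr rfl fun j _ => by ring

lemma nuclearNorm_tailMat {N : ℕ} {lam : Fin N → ℝ} {u v : Fin N → Fin N → ℂ}
    (hnn : ∀ j, 0 ≤ lam j)
    (hu : ∀ i j, ∑ k, (starRingEnd ℂ) (u i k) * u j k = if i = j then 1 else 0)
    (hv : ∀ i j, ∑ k, (starRingEnd ℂ) (v i k) * v j k = if i = j then 1 else 0) (r : ℕ) :
    nuclearNorm (tailMat lam u v r) = ∑ j, tailSingularValues lam r j := by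
  rw [tailMat_eq_mul_diagonal_mul_conjTranspose]
  exact nuclearNorm_mul_diagonal_mul_conjTranspose
    (conjTranspose_mul_self_transpose_of_orthonormal hu)
    (conjTranspose_mul_self_transpose_of_orthonormal hv) (tailSingularValues_nonneg hnn r)

lemma l2_opNorm_mul_tailMat_mul_conjTranspose_le {m N : ℕ} {lam : Fin N → ℝ}
    (hnn : ∀ j, 0 ≤ lam j) (u v : Fin N → Fin N → ℂ) (r : ℕ) (M : Matrix (Fin m) (Fin N) ℂ) :
    ‖M * tailMat lam u v r * Mᴴ‖ ≤ ∑ j, tailSingularValues lam r j *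
      (‖(EuclideanSpace.equiv (Fin m) ℂ).symm (M *ᵥ u j)‖ *
        ‖(EuclideanSpace.equiv (Fin m) ℂ).symm (M *ᵥ v j)‖) := by
  have hrankOne : ∀ a b : Fin N → ℂ,
      M * vecMulVec a (star b) * Mᴴ = vecMulVec (M *ᵥ a) (star (M *ᵥ b)) := by
    intro a b
    rw [mul_vecMulVec, vecMulVec_mul, star_mulVec]
  simp only [tailMat_eq_sum, Matrix.mul_sum, Matrix.sum_mul, Matrix.mul_smul, Matrix.smul_mul,
    hrankOne]
  refine (norm_sum_le _ _).trans (Finset.sum_le_sum fun j _ => ?_)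
  rw [norm_smul, Real.norm_of_nonneg (tailSingularValues_nonneg hnn r j)]
  gcongr
  · exact tailSingularValues_nonneg hnn r j
  · exact l2_opNorm_vecMulVec_star_le _ _

theorem stmt_1_general {N m : ℕ}
    (lam : Fin N → ℝ) (u v : Fin N → Fin N → ℂ)
    (hnn : ∀ j, 0 ≤ lam j)
    (hu : ∀ i j, ∑ k, (starRingEnd ℂ) (u i k) * u j k = if i = j then 1 else 0)
    (hv : ∀ i j, ∑ k, (starRingEnd ℂ) (v i k) * v j k = if i = j then 1 else 0)
    (r : ℕ)
    (ε : ℝ)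
    (M : Matrix (Fin m) (Fin N) ℂ)
    (hM : IsJLMap M ε {x | ∃ j : Fin N, r ≤ (j : ℕ) ∧ (x = u j ∨ x = v j)}) :
    sval (M * tailMat lam u v r * Mᴴ) 0 ≤ (1 + ε) * nuclearNorm (tailMat lam u v r) := by
  calc sval (M * tailMat lam u v r * Mᴴ) 0
      ≤ ‖M * tailMat lam u v r * Mᴴ‖ := sval_le_l2_opNorm _ 0
    _ ≤ ∑ j, tailSingularValues lam r j *
          (‖(EuclideanSpace.equiv (Fin m) ℂ).symm (M *ᵥ u j)‖ *
            ‖(EuclideanSpace.equiv (Fin m) ℂ).symm (M *ᵥ v j)‖) :=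
        l2_opNorm_mul_tailMat_mul_conjTranspose_le hnn u v r M
    _ ≤ ∑ j, tailSingularValues lam r j * (1 + ε) := by
        refine Finset.sum_le_sum fun j _ => ?_
        by_cases hj : r ≤ (j : ℕ)
        · gcongr
          · exact tailSingularValues_nonneg hnn r j
          · exact hM.norm_mulVec_mul_norm_mulVec_le ⟨j, hj, Or.inl rfl⟩ ⟨j, hj, Or.inr rfl⟩
              (nsq_eq_one_of_orthonormal hu j) (nsq_eq_one_of_orthonormal hv j)
        · simp [tailSingularValues, hj]
    _ = (1 + ε) * nuclearNorm (tailMat lam u v r) := by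
        rw [nuclearNorm_tailMat hnn hu hv, Finset.mul_sum]
        simp_rw [mul_comm]

/-- If `M` is an ε-JL map of the smallest `N−r` left and right singular vectors
of `A`, then `σ₁(M A_{∖r} M*) ≤ (1+ε)·‖A_{∖r}‖_*`. -/
theorem stmt_1 {N m : ℕ} (A : Matrix (Fin N) (Fin N) ℂ)
    (lam : Fin N → ℝ) (u v : Fin N → Fin N → ℂ)
    (hord : ∀ i j : Fin N, i ≤ j → lam j ≤ lam i) (hnn : ∀ j, 0 ≤ lam j)
    (hu : ∀ i j, ∑ k, (starRingEnd ℂ) (u i k) * u j k = if i = j then 1 else 0)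
    (hv : ∀ i j, ∑ k, (starRingEnd ℂ) (v i k) * v j k = if i = j then 1 else 0)
    (hA : A = ∑ j, lam j • Matrix.vecMulVec (u j) (fun k => (starRingEnd ℂ) (v j k)))
    (r : ℕ) (hr1 : 1 ≤ r) (hrN : r ≤ N)
    (ε : ℝ) (hε0 : 0 < ε) (hε1 : ε < 1)
    (M : Matrix (Fin m) (Fin N) ℂ)
    (hM : IsJLMap M ε {x | ∃ j : Fin N, r ≤ (j : ℕ) ∧ (x = u j ∨ x = v j)}) :
    sval (M * tailMat lam u v r * Mᴴ) 0 ≤ (1 + ε) * nuclearNorm (tailMat lam u v r) :=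
  stmt_1_general lam u v hnn hu hv r ε M hM
end

section
/- Let q ∈ (0,1/3), c ∈ [1,∞), ε < min{1/20, (1−3q)/(4(1+q))} with ε > 0, and ℓ, r ∈ {1,…,N} with 2 ≤ ℓ ≤ r. Let A ∈ ℂ^{N×N} be Hermitian positive semidefinite with eigenvalues λ_1 ≥ … ≥ λ_N ≥ 0 satisfying: (i) λ_j = c·q^j for all j ∈ {1,…,ℓ}, and (ii) ‖A_{∖r}‖_* ≤ ε·λ_ℓ, where A_{∖r} is the tail of a fixed eigendecomposition A = Σ_j λ_j u_j u_j* beyond index r. Suppose M ∈ ℂ^{m×N} satisfies: (1) M is an ε-JL map of the column space of A_r := Σ_{j≤r} λ_j u_j u_j*; (2) M is an ε-JL map of the column space of A_r*; (3) M is an ε-JL map of the set {u_j : r < j ≤ N}. Let λ̃_j := σ_j(M A M*) and g_j := (λ̃_j − λ̃_{j+1})/λ̃_j. Then: (a) |λ̃_j − λ_j| ≤ 4ε·λ_j for all j ∈ {1,…,ℓ}; (b) λ̃_j ≤ (1+4ε)·c·q^j < (1−4ε)·c·q^{j−1} ≤ λ̃_{j−1} for all j ∈ {2,…,ℓ}, so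 the order of the top ℓ eigenvalues of A is strictly preserved in M A M*; and (c) 1/2 < g_j ≤ 1 for all j ∈ {1,…,ℓ−1}. -/
open scoped Matrix ComplexOrder

/-- The Euclidean (ℓ²) norm of a vector in `ℂ^n`. -/
noncomputable def l2 {n : ℕ} (x : Fin n → ℂ) : ℝ := Real.sqrt (nsq x)

/-- The head `A_r = Σ_{j ≤ r} λ_j u_j u_j*` of an eigendecomposition of a Hermitian matrix
(`r` counted 1-based, i.e. the sum is over all 0-based indices `j` with `j < r`). -/
noncomputable def headMatH {N : ℕ} (lam : Fin N → ℝ) (u : Fin N → Fin N → ℂ) (r : ℕ) :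
    Matrix (Fin N) (Fin N) ℂ :=
  ∑ j : Fin N, if (j : ℕ) < r then
    lam j • Matrix.vecMulVec (u j) (fun k => (starRingEnd ℂ) (u j k)) else 0

/-!
Write `A = A_r + E` with `E ⪰ 0` the tail and `A_r = B²`, `B = A_r^{1/2}`. Away from zero,
`M A_r M* = (MB)(MB)*` has the same eigenvalues as `(MB)*(MB)`, whose quadratic form
`x ↦ ‖MBx‖²` is within a factor `1 ± ε` of `‖Bx‖² = x* A_r x`, because `Bx` lies in the column
space of `A_r`. By Courant–Fischer this moves each top eigenvalue by a factor `1 ± ε`; adding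
`M E M*` raises it by at most `‖M E M*‖ ≤ (1 + ε) ‖E‖_* ≤ (1 + ε) ε λ_ℓ`, by the JL property on the
tail eigenvectors. For PSD matrices singular values are eigenvalues, and the geometric decay
`λ_j = c q^j` with the bound on `ε` then separates consecutive eigenvalues, giving (b) and (c).
-/

open Matrix

section Vectors

variable {d : ℕ}

theorem nsq_eq_norm_sq_s9 (x : Fin d → ℂ) :
    nsq x = ‖(WithLp.toLp 2 x : EuclideanSpace ℂ (Fin d))‖ ^ 2 := by
  rw [EuclideanSpace.norm_eq, Real.sq_sqrt (by positivity)]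
  rfl

theorem nsq_nonneg (x : Fin d → ℂ) : 0 ≤ nsq x := by
  rw [nsq_eq_norm_sq_s9]; positivity

theorem nsq_pos {x : Fin d → ℂ} (hx : x ≠ 0) : 0 < nsq x := by
  rw [nsq_eq_norm_sq_s9]
  exact pow_pos (norm_pos_iff.2 fun h => hx (congrArg WithLp.ofLp h)) 2

theorem star_dotProduct_self_eq_nsq (x : Fin d → ℂ) : star x ⬝ᵥ x = (nsq x : ℂ) := by
  simp only [dotProduct, nsq, Pi.star_apply, Complex.ofReal_sum, Complex.ofReal_pow]
  exact Finset.sum_congr rfl fun i _ => by rw [RCLike.star_def, mul_comm, Complex.mul_conj']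

theorem norm_star_dotProduct_sq_le (x y : Fin d → ℂ) :
    ‖star x ⬝ᵥ y‖ ^ 2 ≤ nsq x * nsq y := by
  have h := norm_inner_le_norm (𝕜 := ℂ) (WithLp.toLp 2 x : EuclideanSpace ℂ (Fin d))
    (WithLp.toLp 2 y)
  rw [EuclideanSpace.inner_toLp_toLp, dotProduct_comm] at h
  rw [nsq_eq_norm_sq_s9, nsq_eq_norm_sq_s9, ← mul_pow]
  exact pow_le_pow_left₀ (norm_nonneg _) h 2

end Vectors

section Orthonormal

variable {d : ℕ} {ι : Type*} [DecidableEq ι]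

def IsOrthonormal (v : ι → Fin d → ℂ) : Prop :=
  ∀ i j, star (v i) ⬝ᵥ v j = if i = j then 1 else 0

variable {v : ι → Fin d → ℂ}

theorem IsOrthonormal.star_dotProduct_sum (hv : IsOrthonormal v) {s : Finset ι} (c : ι → ℂ)
    {j : ι} (hj : j ∈ s) : star (v j) ⬝ᵥ ∑ i ∈ s, c i • v i = c j := by
  simp [dotProduct_sum, dotProduct_smul, hv j, hj]

theorem IsOrthonormal.star_sum_dotProduct_sum (hv : IsOrthonormal v) (s : Finset ι)
    (b c : ι → ℂ) :
    star (∑ i ∈ s, b i • v i) ⬝ᵥ ∑ i ∈ s, c i • v i = ∑ i ∈ s, star (b i) * c i := by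
  simp only [star_sum, sum_dotProduct, star_smul, smul_dotProduct, smul_eq_mul]
  exact Finset.sum_congr rfl fun i hi => by rw [hv.star_dotProduct_sum c hi]

theorem IsOrthonormal.nsq_sum (hv : IsOrthonormal v) (s : Finset ι) (c : ι → ℂ) :
    nsq (∑ i ∈ s, c i • v i) = ∑ i ∈ s, ‖c i‖ ^ 2 := by
  have h := hv.star_sum_dotProduct_sum s c c
  rw [star_dotProduct_self_eq_nsq] at h
  have : ∀ i ∈ s, star (c i) * c i = ((‖c i‖ ^ 2 : ℝ) : ℂ) := fun i _ => by
    rw [RCLike.star_def, Complex.conj_mul', Complex.ofReal_pow]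
  rw [Finset.sum_congr rfl this, ← Complex.ofReal_sum] at h
  exact_mod_cast h

theorem IsOrthonormal.nsq_eq_one (hv : IsOrthonormal v) (i : ι) : nsq (v i) = 1 := by
  have h := star_dotProduct_self_eq_nsq (v i)
  rw [hv i i, if_pos rfl] at h
  exact_mod_cast h.symm

theorem IsOrthonormal.linearIndependent (hv : IsOrthonormal v) : LinearIndependent ℂ v := by
  rw [linearIndependent_iff']
  intro s c hc j hj
  simpa [hc] using (hv.star_dotProduct_sum c hj).symm

end Orthonormal

section QuadForm

variable {d m : ℕ}

noncomputable def quadForm (X : Matrix (Fin d) (Fin d) ℂ) (x : Fin d → ℂ) : ℝ :=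
  (star x ⬝ᵥ X *ᵥ x).re

theorem quadForm_add (X Y : Matrix (Fin d) (Fin d) ℂ) (x : Fin d → ℂ) :
    quadForm (X + Y) x = quadForm X x + quadForm Y x := by
  simp [quadForm, add_mulVec, dotProduct_add]

theorem quadForm_conjTranspose_mul_self (X : Matrix (Fin m) (Fin d) ℂ) (x : Fin d → ℂ) :
    quadForm (Xᴴ * X) x = nsq (X *ᵥ x) := by
  rw [quadForm, ← mulVec_mulVec, dotProduct_mulVec, ← star_mulVec, star_dotProduct_self_eq_nsq,
    Complex.ofReal_re]

theorem quadForm_mul_mul_conjTranspose (Y : Matrix (Fin d) (Fin d) ℂ)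
    (M : Matrix (Fin m) (Fin d) ℂ) (x : Fin m → ℂ) :
    quadForm (M * Y * Mᴴ) x = quadForm Y (Mᴴ *ᵥ x) := by
  simp only [quadForm, ← mulVec_mulVec, dotProduct_mulVec (star x), star_mulVec,
    conjTranspose_conjTranspose]

theorem quadForm_nonneg {X : Matrix (Fin d) (Fin d) ℂ} (hX : X.PosSemidef) (x : Fin d → ℂ) :
    0 ≤ quadForm X x :=
  hX.re_dotProduct_nonneg x

theorem IsOrthonormal.quadForm_sum {ι : Type*} [DecidableEq ι] {v : ι → Fin d → ℂ}
    (hv : IsOrthonormal v) {X : Matrix (Fin d) (Fin d) ℂ} {μ : ι → ℝ}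
    (hX : ∀ i, X *ᵥ v i = (μ i : ℂ) • v i) (s : Finset ι) (c : ι → ℂ) :
    quadForm X (∑ i ∈ s, c i • v i) = ∑ i ∈ s, μ i * ‖c i‖ ^ 2 := by
  have hXc : X *ᵥ ∑ i ∈ s, c i • v i = ∑ i ∈ s, (μ i * c i) • v i := by
    simp only [mulVec_sum, mulVec_smul, hX, smul_smul, mul_comm (c _)]
  rw [quadForm, hXc, hv.star_sum_dotProduct_sum]
  have : ∀ i ∈ s, star (c i) * (μ i * c i) = ((μ i * ‖c i‖ ^ 2 : ℝ) : ℂ) := fun i _ => by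
    rw [mul_left_comm, RCLike.star_def, Complex.conj_mul', Complex.ofReal_mul,
      Complex.ofReal_pow]
  rw [Finset.sum_congr rfl this, ← Complex.ofReal_sum, Complex.ofReal_re]

end QuadForm

section MinMax

variable {d : ℕ}

/-- Certificates for the two halves of Courant–Fischer: `QuadFormGE X k t` says that the `k`-th
largest eigenvalue (0-based) of a Hermitian `X` is at least `t`, `QuadFormLE X k t` that it is at
most `t`. -/
def QuadFormGE (X : Matrix (Fin d) (Fin d) ℂ) (k : ℕ) (t : ℝ) : Prop :=
  ∃ S : Submodule ℂ (Fin d → ℂ), k + 1 ≤ Module.finrank ℂ S ∧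
    ∀ x ∈ S, t * nsq x ≤ quadForm X x

def QuadFormLE (X : Matrix (Fin d) (Fin d) ℂ) (k : ℕ) (t : ℝ) : Prop :=
  ∃ S : Submodule ℂ (Fin d → ℂ), d ≤ k + Module.finrank ℂ S ∧
    ∀ x ∈ S, quadForm X x ≤ t * nsq x

variable {X Y : Matrix (Fin d) (Fin d) ℂ} {k : ℕ} {t t' : ℝ}

theorem QuadFormGE.lt_dim (h : QuadFormGE X k t) : k < d := by
  obtain ⟨S, hS, -⟩ := h
  have := S.finrank_le
  rw [Module.finrank_fin_fun] at this
  omega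

theorem QuadFormGE.le (hge : QuadFormGE X k t) (hle : QuadFormLE X k t') : t ≤ t' := by
  obtain ⟨S, hS, hSx⟩ := hge
  obtain ⟨T, hT, hTx⟩ := hle
  have hdim := Submodule.finrank_sup_add_finrank_inf_eq S T
  have hsup := (S ⊔ T).finrank_le
  rw [Module.finrank_fin_fun] at hsup
  obtain ⟨x, hx, hx0⟩ := Submodule.exists_mem_ne_zero_of_ne_bot fun h : S ⊓ T = ⊥ => by
    rw [h, finrank_bot] at hdim
    omega
  rw [Submodule.mem_inf] at hx
  exact le_of_mul_le_mul_right ((hSx x hx.1).trans (hTx x hx.2)) (nsq_pos hx0)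

theorem QuadFormGE.mono (h : ∀ x, quadForm X x ≤ quadForm Y x) (hge : QuadFormGE X k t) :
    QuadFormGE Y k t := by
  obtain ⟨S, hS, hSx⟩ := hge
  exact ⟨S, hS, fun x hx => (hSx x hx).trans (h x)⟩

theorem QuadFormGE.of_smul_le {a : ℝ} (ha : 0 ≤ a) (h : ∀ x, a * quadForm X x ≤ quadForm Y x)
    (hge : QuadFormGE X k t) : QuadFormGE Y k (a * t) := by
  obtain ⟨S, hS, hSx⟩ := hge
  refine ⟨S, hS, fun x hx => ?_⟩
  nlinarith [hSx x hx, h x]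

theorem QuadFormGE.of_le_add {e : ℝ} (h : ∀ x, quadForm X x ≤ quadForm Y x + e * nsq x)
    (hge : QuadFormGE X k t) : QuadFormGE Y k (t - e) := by
  obtain ⟨S, hS, hSx⟩ := hge
  refine ⟨S, hS, fun x hx => ?_⟩
  nlinarith [hSx x hx, h x]

theorem QuadFormLE.of_le_smul {a : ℝ} (ha : 0 ≤ a) (h : ∀ x, quadForm Y x ≤ a * quadForm X x)
    (hle : QuadFormLE X k t) : QuadFormLE Y k (a * t) := by
  obtain ⟨S, hS, hSx⟩ := hle
  refine ⟨S, hS, fun x hx => ?_⟩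
  nlinarith [hSx x hx, h x]

section Eigenbasis

variable {v : Fin d → Fin d → ℂ} {μ : Fin d → ℝ}

theorem IsOrthonormal.finrank_span_image (hv : IsOrthonormal v) (s : Finset (Fin d)) :
    Module.finrank ℂ (Submodule.span ℂ (v '' s)) = s.card := by
  rw [Set.image_eq_range, ← Fintype.card_coe,
    ← finrank_span_eq_card (hv.linearIndependent.comp _ Subtype.val_injective)]
  rfl

theorem IsOrthonormal.quadFormGE_quadFormLE (hv : IsOrthonormal v)
    (hX : ∀ i, X *ᵥ v i = (μ i : ℂ) • v i) (hμ : Antitone μ) (k : Fin d) :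
    QuadFormGE X k (μ k) ∧ QuadFormLE X k (μ k) := by
  refine ⟨⟨_, (hv.finrank_span_image (Finset.Iic k)).trans (Fin.card_Iic k) |>.ge, ?_⟩,
    ⟨_, by rw [hv.finrank_span_image (Finset.Ici k), Fin.card_Ici]; omega, ?_⟩⟩ <;>
  intro x hx <;>
  obtain ⟨c, rfl⟩ := Submodule.mem_span_image_finset_iff_exists_fun' ℂ |>.1 hx <;>
  rw [hv.quadForm_sum hX, hv.nsq_sum, Finset.mul_sum] <;>
  refine Finset.sum_le_sum fun i hi => mul_le_mul_of_nonneg_right (hμ ?_) (by positivity)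
  · exact Finset.mem_Iic.1 hi
  · exact Finset.mem_Ici.1 hi

end Eigenbasis

end MinMax

section SortedEigenvalues

variable {d : ℕ} {X : Matrix (Fin d) (Fin d) ℂ}

/-- The eigenvalues in decreasing order, indexed as in `sval`. -/
noncomputable def sortedEigenvalue (hX : X.IsHermitian) (k : Fin d) : ℝ :=
  hX.eigenvalues (Tuple.sort hX.eigenvalues k.rev)

noncomputable def sortedEigenvector (hX : X.IsHermitian) (k : Fin d) : Fin d → ℂ :=
  hX.eigenvectorBasis (Tuple.sort hX.eigenvalues k.rev)

theorem isOrthonormal_sortedEigenvector (hX : X.IsHermitian) :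
    IsOrthonormal (sortedEigenvector hX) := by
  intro i j
  have h := orthonormal_iff_ite.1 hX.eigenvectorBasis.orthonormal
    (Tuple.sort hX.eigenvalues i.rev) (Tuple.sort hX.eigenvalues j.rev)
  rw [EuclideanSpace.inner_eq_star_dotProduct, dotProduct_comm] at h
  simpa [sortedEigenvector, Fin.rev_inj] using h

theorem mulVec_sortedEigenvector (hX : X.IsHermitian) (k : Fin d) :
    X *ᵥ sortedEigenvector hX k = (sortedEigenvalue hX k : ℂ) • sortedEigenvector hX k := by
  rw [sortedEigenvector, hX.mulVec_eigenvectorBasis, RCLike.real_smul_eq_coe_smul (K := ℂ)]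
  rfl

theorem antitone_sortedEigenvalue (hX : X.IsHermitian) : Antitone (sortedEigenvalue hX) :=
  (Tuple.monotone_sort hX.eigenvalues).comp_antitone Fin.rev_anti

theorem quadFormGE_quadFormLE_sortedEigenvalue (hX : X.IsHermitian) (k : Fin d) :
    QuadFormGE X k (sortedEigenvalue hX k) ∧ QuadFormLE X k (sortedEigenvalue hX k) :=
  (isOrthonormal_sortedEigenvector hX).quadFormGE_quadFormLE (mulVec_sortedEigenvector hX)
    (antitone_sortedEigenvalue hX) k

theorem sortedEigenvalue_eq_of_isOrthonormal (hX : X.IsHermitian) {v : Fin d → Fin d → ℂ}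
    {μ : Fin d → ℝ} (hv : IsOrthonormal v) (hXv : ∀ i, X *ᵥ v i = (μ i : ℂ) • v i)
    (hμ : Antitone μ) (k : Fin d) : sortedEigenvalue hX k = μ k :=
  have hsorted := quadFormGE_quadFormLE_sortedEigenvalue hX k
  have hgiven := hv.quadFormGE_quadFormLE hXv hμ k
  le_antisymm (hsorted.1.le hgiven.2) (hgiven.1.le hsorted.2)

theorem sval_eq_sortedEigenvalue (hX : X.PosSemidef) (k : Fin d) :
    sval X k = sortedEigenvalue hX.isHermitian k := by
  have hXX := isHermitian_conjTranspose_mul_self X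
  have hnn (i : Fin d) : 0 ≤ sortedEigenvalue hX.isHermitian i := hX.eigenvalues_nonneg _
  have hsq : sortedEigenvalue hXX k = sortedEigenvalue hX.isHermitian k ^ 2 := by
    refine sortedEigenvalue_eq_of_isOrthonormal hXX
      (isOrthonormal_sortedEigenvector hX.isHermitian) (fun i => ?_)
      (fun i j hij => pow_le_pow_left₀ (hnn j) (antitone_sortedEigenvalue _ hij) 2) k
    rw [← mulVec_mulVec, hX.isHermitian.eq, mulVec_sortedEigenvector, mulVec_smul,
      mulVec_sortedEigenvector, smul_smul, Complex.ofReal_pow, sq]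
  rw [sval, dif_pos k.isLt, ← sortedEigenvalue, Fin.eta, hsq, Real.sqrt_sq (hnn k)]

theorem nuclearNorm_eq_re_trace (hX : X.PosSemidef) : nuclearNorm X = X.trace.re := by
  rw [nuclearNorm, ← Fin.sum_univ_eq_sum_range, hX.isHermitian.trace_eq_sum_eigenvalues,
    Complex.re_sum]
  calc ∑ k : Fin d, sval X k = ∑ k : Fin d, sortedEigenvalue hX.isHermitian k :=
        Finset.sum_congr rfl fun k _ => sval_eq_sortedEigenvalue hX k
    _ = _ := by
      simpa [sortedEigenvalue] using
        Equiv.sum_comp (Fin.revPerm.trans (Tuple.sort hX.isHermitian.eigenvalues))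
          hX.isHermitian.eigenvalues

end SortedEigenvalues

section Transfer

variable {d m : ℕ}

theorem nsq_mulVec_sq_le (C : Matrix (Fin m) (Fin d) ℂ) (x : Fin d → ℂ) :
    nsq (C *ᵥ x) ^ 2 ≤ nsq x * nsq (Cᴴ *ᵥ C *ᵥ x) := by
  have h : star x ⬝ᵥ Cᴴ *ᵥ C *ᵥ x = (nsq (C *ᵥ x) : ℂ) := by
    rw [dotProduct_mulVec, ← star_mulVec, star_dotProduct_self_eq_nsq]
  have := norm_star_dotProduct_sq_le x (Cᴴ *ᵥ C *ᵥ x)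
  rwa [h, Complex.norm_of_nonneg (nsq_nonneg _)] at this

/-- `C` maps a witness subspace for `Cᴴ C` injectively (as `t > 0`) onto one for `C Cᴴ`, by
Cauchy–Schwarz: `‖C x‖⁴ ≤ ‖x‖² ‖Cᴴ C x‖²`. -/
theorem QuadFormGE.mul_conjTranspose {C : Matrix (Fin m) (Fin d) ℂ} {k : ℕ} {t : ℝ}
    (ht : 0 < t) (h : QuadFormGE (Cᴴ * C) k t) : QuadFormGE (C * Cᴴ) k t := by
  obtain ⟨S, hS, hSx⟩ := h
  simp only [quadForm_conjTranspose_mul_self] at hSx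
  have hinj : Function.Injective (C.mulVecLin.domRestrict S) := by
    refine (injective_iff_map_eq_zero _).2 fun x hx => Subtype.ext ?_
    by_contra hx0
    have := hSx x x.2
    simp only [LinearMap.domRestrict_apply, mulVecLin_apply] at hx
    rw [hx] at this
    nlinarith [nsq_pos hx0, show nsq (0 : Fin m → ℂ) = 0 by simp [nsq]]
  refine ⟨S.map C.mulVecLin, ?_, ?_⟩
  · rwa [← LinearMap.range_domRestrict, LinearMap.finrank_range_of_inj hinj]
  · rintro _ ⟨x, hx, rfl⟩
    have hCC : C * Cᴴ = Cᴴᴴ * Cᴴ := by rw [conjTranspose_conjTranspose]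
    rw [mulVecLin_apply, hCC, quadForm_conjTranspose_mul_self]
    rcases eq_or_ne x 0 with rfl | hx0
    · simp [nsq]
    refine le_of_mul_le_mul_left ?_ (nsq_pos hx0)
    nlinarith [hSx x hx, nsq_mulVec_sq_le C x, nsq_nonneg (C *ᵥ x)]

end Transfer

section RankOneSum

variable {d : ℕ} {ι : Type*} [Fintype ι]

noncomputable def rankOneSum (u : ι → Fin d → ℂ) (w : ι → ℝ) : Matrix (Fin d) (Fin d) ℂ :=
  ∑ j, w j • vecMulVec (u j) (star (u j))

variable {u : ι → Fin d → ℂ}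

theorem rankOneSum_mulVec (u : ι → Fin d → ℂ) (w : ι → ℝ) (x : Fin d → ℂ) :
    rankOneSum u w *ᵥ x = ∑ j, w j • (star (u j) ⬝ᵥ x) • u j := by
  simp [rankOneSum, sum_mulVec, smul_mulVec, vecMulVec_mulVec]

theorem conjTranspose_rankOneSum (u : ι → Fin d → ℂ) (w : ι → ℝ) :
    (rankOneSum u w)ᴴ = rankOneSum u w := by
  simp [rankOneSum, conjTranspose_sum, conjTranspose_smul, conjTranspose_vecMulVec]

theorem rankOneSum_sub (u : ι → Fin d → ℂ) (w w' : ι → ℝ) :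
    rankOneSum u w - rankOneSum u w' = rankOneSum u (w - w') := by
  simp [rankOneSum, ← Finset.sum_sub_distrib, sub_smul]

theorem quadForm_rankOneSum (u : ι → Fin d → ℂ) (w : ι → ℝ) (x : Fin d → ℂ) :
    quadForm (rankOneSum u w) x = ∑ j, w j * ‖star (u j) ⬝ᵥ x‖ ^ 2 := by
  simp only [quadForm, rankOneSum_mulVec, dotProduct_sum, dotProduct_smul, Complex.re_sum]
  refine Finset.sum_congr rfl fun j _ => ?_
  rw [star_dotProduct x (u j), Complex.real_smul, smul_eq_mul, RCLike.star_def, Complex.mul_conj',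
    ← Complex.ofReal_pow, ← Complex.ofReal_mul, Complex.ofReal_re]

theorem posSemidef_rankOneSum {w : ι → ℝ} (hw : 0 ≤ w) : (rankOneSum u w).PosSemidef :=
  posSemidef_sum _ fun j _ => (posSemidef_vecMulVec_self_star (u j)).smul (hw j)

theorem quadForm_mul_rankOneSum_mul_conjTranspose_le {m : ℕ} {M : Matrix (Fin m) (Fin d) ℂ}
    {w : ι → ℝ} (hw : 0 ≤ w) {b : ℝ}
    (hMv : ∀ i, w i ≠ 0 → nsq (M *ᵥ u i) ≤ b) (y : Fin m → ℂ) :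
    quadForm (M * rankOneSum u w * Mᴴ) y ≤ b * (∑ i, w i) * nsq y := by
  rw [quadForm_mul_mul_conjTranspose, quadForm_rankOneSum, Finset.mul_sum, Finset.sum_mul]
  refine Finset.sum_le_sum fun i _ => ?_
  rcases eq_or_ne (w i) 0 with hi | hi
  · simp [hi]
  have hCS : ‖star (u i) ⬝ᵥ Mᴴ *ᵥ y‖ ^ 2 ≤ nsq (M *ᵥ u i) * nsq y := by
    rw [dotProduct_mulVec, ← conjTranspose_conjTranspose M, ← star_mulVec,
      conjTranspose_conjTranspose]
    exact norm_star_dotProduct_sq_le _ _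
  calc w i * ‖star (u i) ⬝ᵥ Mᴴ *ᵥ y‖ ^ 2 ≤ w i * (nsq (M *ᵥ u i) * nsq y) :=
        mul_le_mul_of_nonneg_left hCS (hw i)
    _ ≤ w i * (b * nsq y) :=
        mul_le_mul_of_nonneg_left (mul_le_mul_of_nonneg_right (hMv i hi) (nsq_nonneg y)) (hw i)
    _ = b * w i * nsq y := by ring

variable [DecidableEq ι]

theorem IsOrthonormal.rankOneSum_mulVec (hu : IsOrthonormal u) (w : ι → ℝ) (i : ι) :
    rankOneSum u w *ᵥ u i = (w i : ℂ) • u i := by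
  simp [_root_.rankOneSum_mulVec, hu _ i]

theorem IsOrthonormal.rankOneSum_mul_rankOneSum (hu : IsOrthonormal u) (w w' : ι → ℝ) :
    rankOneSum u w * rankOneSum u w' = rankOneSum u (w * w') := by
  simp [rankOneSum, Finset.sum_mul_sum, vecMulVec_mul_vecMulVec, hu _ _, mul_smul, apply_ite,
    smul_comm (w' _)]

theorem IsOrthonormal.trace_rankOneSum (hu : IsOrthonormal u) (w : ι → ℝ) :
    (rankOneSum u w).trace = ∑ j, (w j : ℂ) := by
  simp [rankOneSum, trace_sum, trace_smul, trace_vecMulVec, dotProduct_comm (u _), hu _ _]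

theorem IsOrthonormal.nuclearNorm_rankOneSum {v : Fin d → Fin d → ℂ} (hv : IsOrthonormal v)
    {w : Fin d → ℝ} (hw : 0 ≤ w) : nuclearNorm (rankOneSum v w) = ∑ j, w j := by
  rw [nuclearNorm_eq_re_trace (posSemidef_rankOneSum hw), hv.trace_rankOneSum,
    ← Complex.ofReal_sum, Complex.ofReal_re]

end RankOneSum

section Perturbation

variable {N m : ℕ} {ε : ℝ} {M : Matrix (Fin m) (Fin N) ℂ}

theorem IsJLMap.quadForm_bounds {S : Set (Fin N → ℂ)} (hM : IsJLMap M ε S)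
    {B : Matrix (Fin N) (Fin N) ℂ} (hB : ∀ x, B *ᵥ x ∈ S) (x : Fin N → ℂ) :
    (1 - ε) * quadForm (Bᴴ * B) x ≤ quadForm ((M * B)ᴴ * (M * B)) x ∧
      quadForm ((M * B)ᴴ * (M * B)) x ≤ (1 + ε) * quadForm (Bᴴ * B) x := by
  simp only [quadForm_conjTranspose_mul_self, ← mulVec_mulVec]
  exact hM _ (hB x)

variable {H E B : Matrix (Fin N) (Fin N) ℂ} {S : Set (Fin N → ℂ)} {e t : ℝ} {j : ℕ}

theorem mul_add_mul_conjTranspose (hB : Bᴴ = B) (hH : Bᴴ * B = H) (E : Matrix (Fin N) (Fin N) ℂ) :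
    M * (H + E) * Mᴴ = (M * B) * (M * B)ᴴ + M * E * Mᴴ := by
  rw [conjTranspose_mul, hB, ← hH, hB]
  simp only [Matrix.mul_add, Matrix.add_mul, Matrix.mul_assoc]

theorem sval_ge_of_quadFormGE (hB : Bᴴ = B) (hH : Bᴴ * B = H) (hE : E.PosSemidef)
    (hM : IsJLMap M ε S) (hBS : ∀ x, B *ᵥ x ∈ S) (hε : ε < 1) (ht : 0 < t)
    (hHt : QuadFormGE H j t) :
    j < m ∧ (1 - ε) * t ≤ sval (M * (H + E) * Mᴴ) j := by
  have hCC : QuadFormGE ((M * B)ᴴ * (M * B)) j ((1 - ε) * t) :=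
    hHt.of_smul_le (by linarith) fun x => hH ▸ (hM.quadForm_bounds hBS x).1
  have hT : QuadFormGE (M * (H + E) * Mᴴ) j ((1 - ε) * t) := by
    refine (hCC.mul_conjTranspose (by nlinarith)).mono fun y => ?_
    rw [mul_add_mul_conjTranspose hB hH, quadForm_add, quadForm_mul_mul_conjTranspose]
    linarith [quadForm_nonneg hE (Mᴴ *ᵥ y)]
  have hTpsd := ((hH ▸ posSemidef_conjTranspose_mul_self B).add hE).mul_mul_conjTranspose_same M
  refine ⟨hT.lt_dim, ?_⟩
  rw [sval_eq_sortedEigenvalue hTpsd ⟨j, hT.lt_dim⟩]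
  exact hT.le (quadFormGE_quadFormLE_sortedEigenvalue hTpsd.isHermitian ⟨j, hT.lt_dim⟩).2

theorem sval_le_of_quadFormLE (hB : Bᴴ = B) (hH : Bᴴ * B = H) (hE : E.PosSemidef)
    (hEe : ∀ y, quadForm (M * E * Mᴴ) y ≤ e * nsq y) (hM : IsJLMap M ε S)
    (hBS : ∀ x, B *ᵥ x ∈ S) (hε : 0 ≤ ε) (ht : 0 ≤ t) (hHt : QuadFormLE H j t) (hj : j < m) :
    sval (M * (H + E) * Mᴴ) j ≤ (1 + ε) * t + e := by
  have hTpsd := ((hH ▸ posSemidef_conjTranspose_mul_self B).add hE).mul_mul_conjTranspose_same M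
  rw [sval_eq_sortedEigenvalue hTpsd ⟨j, hj⟩]
  set μ := sortedEigenvalue hTpsd.isHermitian ⟨j, hj⟩
  have hCC : QuadFormGE ((M * B)ᴴᴴ * (M * B)ᴴ) j (μ - e) := by
    refine (quadFormGE_quadFormLE_sortedEigenvalue hTpsd.isHermitian ⟨j, hj⟩).1.of_le_add
      fun y => ?_
    rw [conjTranspose_conjTranspose, mul_add_mul_conjTranspose hB hH, quadForm_add]
    linarith [hEe y]
  have hCC' : QuadFormLE ((M * B)ᴴ * (M * B)) j ((1 + ε) * t) :=
    hHt.of_le_smul (by linarith) fun x => hH ▸ (hM.quadForm_bounds hBS x).2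
  rcases le_or_gt (μ - e) 0 with hμ | hμ
  · nlinarith
  · have := hCC.mul_conjTranspose hμ
    rw [conjTranspose_conjTranspose] at this
    linarith [this.le hCC']

end Perturbation

section Truncation

variable {N : ℕ} {lam : Fin N → ℝ} {u : Fin N → Fin N → ℂ} {r : ℕ}

def truncate (lam : Fin N → ℝ) (r : ℕ) : Fin N → ℝ := fun j => if (j : ℕ) < r then lam j else 0

theorem headMatH_eq_rankOneSum : headMatH lam u r = rankOneSum u (truncate lam r) := by
  refine Finset.sum_congr rfl fun j _ => ?_
  by_cases hj : (j : ℕ) < r <;> simp [truncate, hj]; rfl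

theorem truncate_nonneg (hnn : 0 ≤ lam) : 0 ≤ truncate lam r := fun j => by
  unfold truncate; split_ifs; exacts [hnn j, le_rfl]

theorem truncate_le (hnn : 0 ≤ lam) : truncate lam r ≤ lam := fun j => by
  unfold truncate; split_ifs; exacts [le_rfl, hnn j]

theorem antitone_truncate (hlam : Antitone lam) (hnn : 0 ≤ lam) : Antitone (truncate lam r) := by
  intro i j hij
  unfold truncate
  split_ifs with hj hi hi
  · exact hlam hij
  · exact absurd ((Fin.le_iff_val_le_val.1 hij).trans_lt hj) hi
  · exact hnn i
  · exact le_rfl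

end Truncation

section Sketch

variable {N m : ℕ} {ε : ℝ} {M : Matrix (Fin m) (Fin N) ℂ} {lam : Fin N → ℝ}
  {u : Fin N → Fin N → ℂ} {r : ℕ}

theorem sval_mul_rankOneSum_mul_conjTranspose_bounds (hu : IsOrthonormal u) (hnn : 0 ≤ lam)
    (hlam : Antitone lam)
    (hM1 : IsJLMap M ε (Set.range (headMatH lam u r).mulVec))
    (hM3 : IsJLMap M ε {x | ∃ j : Fin N, r ≤ (j : ℕ) ∧ x = u j})
    (hε0 : 0 ≤ ε) (hε1 : ε < 1) (j : Fin N) (hj : (j : ℕ) < r) (hpos : 0 < lam j) :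
    (1 - ε) * lam j ≤ sval (M * rankOneSum u lam * Mᴴ) j ∧
      sval (M * rankOneSum u lam * Mᴴ) j ≤
        (1 + ε) * lam j + (1 + ε) * nuclearNorm (rankOneSum u lam - headMatH lam u r) := by
  rw [headMatH_eq_rankOneSum] at hM1 ⊢
  set w := truncate lam r
  have hw : 0 ≤ w := truncate_nonneg hnn
  have hwj : w j = lam j := if_pos hj
  set B := rankOneSum u fun i => √(w i)
  have hB : Bᴴ = B := conjTranspose_rankOneSum _ _
  have hH : Bᴴ * B = rankOneSum u w := by
    rw [hB, hu.rankOneSum_mul_rankOneSum]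
    exact congrArg _ (funext fun i => Real.mul_self_sqrt (hw i))
  -- `w i * (√(w i))⁻¹ = √(w i)` holds also where `w i = 0`, since `0⁻¹ = 0`
  have hBS : ∀ x, B *ᵥ x ∈ Set.range (rankOneSum u w).mulVec := fun x =>
    ⟨rankOneSum u (fun i => (√(w i))⁻¹) *ᵥ x, by
      rw [mulVec_mulVec, hu.rankOneSum_mul_rankOneSum]
      exact congrArg (fun w' => rankOneSum u w' *ᵥ x)
        (funext fun i => by rw [Pi.mul_apply, ← div_eq_mul_inv, Real.div_sqrt])⟩
  have htail : 0 ≤ lam - w := sub_nonneg.2 (truncate_le hnn)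
  have hsplit : rankOneSum u lam = rankOneSum u w + rankOneSum u (lam - w) := by
    rw [← rankOneSum_sub, add_sub_cancel]
  have hEe := quadForm_mul_rankOneSum_mul_conjTranspose_le (M := M) htail (b := 1 + ε)
    fun i hi => by
      have hri : r ≤ (i : ℕ) := not_lt.1 fun h => hi (by simp [w, truncate, h])
      simpa [hu.nsq_eq_one i] using (hM3 (u i) ⟨i, hri, rfl⟩).2
  have hHj := hu.quadFormGE_quadFormLE (hu.rankOneSum_mulVec w) (antitone_truncate hlam hnn) j
  rw [hwj] at hHj
  have hE := posSemidef_rankOneSum (u := u) htail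
  obtain ⟨hjm, hlow⟩ := sval_ge_of_quadFormGE hB hH hE hM1 hBS hε1 hpos hHj.1
  rw [hsplit, add_sub_cancel_left, hu.nuclearNorm_rankOneSum htail]
  exact ⟨hlow, sval_le_of_quadFormLE hB hH hE hEe hM1 hBS hε0 hpos.le hHj.2 hjm⟩

theorem abs_sval_mul_rankOneSum_mul_conjTranspose_sub_le (hu : IsOrthonormal u)
    (hnn : 0 ≤ lam) (hlam : Antitone lam)
    (hM1 : IsJLMap M ε (Set.range (headMatH lam u r).mulVec))
    (hM3 : IsJLMap M ε {x | ∃ j : Fin N, r ≤ (j : ℕ) ∧ x = u j})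
    (hε0 : 0 ≤ ε) (hε1 : ε < 1) (j : Fin N) (hj : (j : ℕ) < r) (hpos : 0 < lam j)
    (htail : nuclearNorm (rankOneSum u lam - headMatH lam u r) ≤ ε * lam j) :
    |sval (M * rankOneSum u lam * Mᴴ) j - lam j| ≤ 4 * ε * lam j := by
  obtain ⟨hlo, hup⟩ :=
    sval_mul_rankOneSum_mul_conjTranspose_bounds hu hnn hlam hM1 hM3 hε0 hε1 j hj hpos
  refine abs_le.2 ⟨by nlinarith, ?_⟩
  nlinarith [mul_le_mul_of_nonneg_left htail (by linarith : (0 : ℝ) ≤ 1 + ε)]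

end Sketch

theorem geometric_step {a b c q : ℝ} (hc : 0 < c) (hq : 0 < q) (h : a * q < b) (j : ℕ) :
    a * c * q ^ (j + 1) < b * c * q ^ j := by
  have hpos : 0 < c * q ^ j := by positivity
  calc a * c * q ^ (j + 1) = a * q * (c * q ^ j) := by ring
    _ < b * (c * q ^ j) := mul_lt_mul_of_pos_right h hpos
    _ = b * c * q ^ j := by ring

theorem half_lt_sub_div_self {x y : ℝ} (hy : 0 ≤ y) (hxy : 2 * y < x) :
    1 / 2 < (x - y) / x ∧ (x - y) / x ≤ 1 := by
  have hx : 0 < x := by linarith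
  constructor
  · rw [lt_div_iff₀ hx]; linarith
  · rw [div_le_one hx]; linarith

theorem gaps_of_abs_sub_geometric_le {s : ℕ → ℝ} {c q δ : ℝ} {ℓ : ℕ} (hc : 0 < c) (hq : 0 < q)
    (hδ : 0 ≤ δ) (hgap : 2 * (1 + δ) * q < 1 - δ)
    (hs : ∀ j < ℓ, |s j - c * q ^ (j + 1)| ≤ δ * (c * q ^ (j + 1))) :
    (∀ j : ℕ, 1 ≤ j → j < ℓ →
      s j ≤ (1 + δ) * c * q ^ (j + 1) ∧
      (1 + δ) * c * q ^ (j + 1) < (1 - δ) * c * q ^ j ∧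
      (1 - δ) * c * q ^ j ≤ s (j - 1)) ∧
    (∀ j : ℕ, j < ℓ - 1 → 1 / 2 < (s j - s (j + 1)) / s j ∧ (s j - s (j + 1)) / s j ≤ 1) := by
  have hbounds (j : ℕ) (hj : j < ℓ) :
      (1 - δ) * c * q ^ (j + 1) ≤ s j ∧ s j ≤ (1 + δ) * c * q ^ (j + 1) := by
    obtain ⟨hlo, hup⟩ := abs_le.1 (hs j hj)
    constructor <;> linarith
  refine ⟨fun j hj1 hj => ⟨(hbounds j hj).2, geometric_step hc hq (by nlinarith) j, ?_⟩,
    fun j hj => half_lt_sub_div_self ?_ ?_⟩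
  · simpa [Nat.sub_add_cancel hj1] using (hbounds (j - 1) (by omega)).1
  · exact le_trans (mul_nonneg (mul_nonneg (by nlinarith) hc.le) (by positivity))
      (hbounds (j + 1) (by omega)).1
  · have := geometric_step hc hq hgap (j + 1)
    linarith [(hbounds j (by omega)).1, (hbounds (j + 1) (by omega)).2]

/-- For a Hermitian PSD matrix with exponentially decaying top eigenvalues and
small tail, the top eigenvalues are accurately approximated by those of `M A M*`
(`λ̃_j := σ_j(M A M*)`, written 0-based below): (a) `|λ̃_j − λ_j| ≤ 4ε·λ_j` on `{1,…,ℓ}`;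
(b) `λ̃_j ≤ (1+4ε)cq^j < (1−4ε)cq^{j−1} ≤ λ̃_{j−1}` on `{2,…,ℓ}` (ordering is preserved);
(c) `1/2 < g_j ≤ 1` on `{1,…,ℓ−1}`, where `g_j = (λ̃_j − λ̃_{j+1})/λ̃_j`. -/
theorem stmt_9 {N m : ℕ} (q c ε : ℝ)
    (hq0 : 0 < q) (hc : 1 ≤ c)
    (hε0 : 0 < ε) (hε1 : ε < min (1 / 20) ((1 - 3 * q) / (4 * (1 + q))))
    (ℓ r : ℕ) (hℓ2 : 2 ≤ ℓ) (hℓr : ℓ ≤ r) (hrN : r ≤ N)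
    (A : Matrix (Fin N) (Fin N) ℂ)
    (lam : Fin N → ℝ) (u : Fin N → Fin N → ℂ)
    (hord : ∀ i j : Fin N, i ≤ j → lam j ≤ lam i) (hnn : ∀ j, 0 ≤ lam j)
    (hu : ∀ i j, ∑ k, (starRingEnd ℂ) (u i k) * u j k = if i = j then 1 else 0)
    (hA : A = ∑ j, lam j • Matrix.vecMulVec (u j) (fun k => (starRingEnd ℂ) (u j k)))
    (hdecay : ∀ j : ℕ, (hj : j < ℓ) → lam ⟨j, by omega⟩ = c * q ^ (j + 1))
    (htail : nuclearNorm (A - headMatH lam u r) ≤ ε * lam ⟨ℓ - 1, by omega⟩)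
    (M : Matrix (Fin m) (Fin N) ℂ)
    (hM1 : IsJLMap M ε (Set.range (headMatH lam u r).mulVec))
    (hM3 : IsJLMap M ε {x | ∃ j : Fin N, r ≤ (j : ℕ) ∧ x = u j}) :
    -- (a)
    (∀ j : ℕ, (hj : j < ℓ) →
      |sval (M * A * Mᴴ) j - lam ⟨j, by omega⟩| ≤ 4 * ε * lam ⟨j, by omega⟩) ∧
    -- (b)  (0-based `j` here corresponds to the 1-based index `j+1 ∈ {2,…,ℓ}`)
    (∀ j : ℕ, 1 ≤ j → j < ℓ →
      sval (M * A * Mᴴ) j ≤ (1 + 4 * ε) * c * q ^ (j + 1) ∧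
      (1 + 4 * ε) * c * q ^ (j + 1) < (1 - 4 * ε) * c * q ^ j ∧
      (1 - 4 * ε) * c * q ^ j ≤ sval (M * A * Mᴴ) (j - 1)) ∧
    -- (c)
    (∀ j : ℕ, j < ℓ - 1 →
      1 / 2 < (sval (M * A * Mᴴ) j - sval (M * A * Mᴴ) (j + 1)) / sval (M * A * Mᴴ) j ∧
      (sval (M * A * Mᴴ) j - sval (M * A * Mᴴ) (j + 1)) / sval (M * A * Mᴴ) j ≤ 1) := by
  have hε20 : ε < 1 / 20 := hε1.trans_le (min_le_left _ _)
  have hgap : 2 * (1 + 4 * ε) * q < 1 - 4 * ε := by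
    have := (lt_div_iff₀ (by positivity)).1 (hε1.trans_le (min_le_right _ _))
    nlinarith
  have ha (j : ℕ) (hj : j < ℓ) :
      |sval (M * A * Mᴴ) j - lam ⟨j, by omega⟩| ≤ 4 * ε * lam ⟨j, by omega⟩ := by
    have hpos : 0 < lam ⟨j, by omega⟩ := by rw [hdecay j hj]; positivity
    have hA' : rankOneSum u lam = A := hA.symm
    refine hA' ▸ abs_sval_mul_rankOneSum_mul_conjTranspose_sub_le hu hnn hord hM1 hM3 hε0.le
      (by linarith) _ (show j < r by omega) hpos (hA' ▸ htail.trans ?_)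
    exact mul_le_mul_of_nonneg_left (hord _ _ (Fin.mk_le_mk.2 (by omega))) hε0.le
  refine ⟨ha, gaps_of_abs_sub_geometric_le (by linarith) hq0 (by linarith) hgap fun j hj => ?_⟩
  simpa [hdecay j hj] using ha j hj
end
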